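/- Let M̂1 = {(x̂^(k), p̂^(k))} and M̂2 = {(ŷ^(k), q̂^(k))} be RochetNet menus indexed by {0,...,K}, let K1, K2 ⊆ {0,...,K}, and let φ : {0,...,K} → K1 × K2 be a bijection, with components φ1, φ2, such that for every k: (x̂^(k), p̂^(k)) = (x̂^(φ1(k)), p̂^(φ1(k))) and (ŷ^(k), q̂^(k)) = (ŷ^(φ2(k)), q̂^(φ2(k))). Assume that with F-probability 1 the buyer's selected option in M̂1 lies in K1 and the buyer's selected option in M̂2 lies in K2. Then for every λ ∈ [0,1], the convex combination M = λ M̂1 + (1−λ) M̂2 satisfies Rev(M) ≥ λ Rev(M̂1) + (1−λ) Rev(M̂2). -/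

import Mathlib

/-!
At almost every valuation `v` the buyer selects some `k₁ ∈ K₁` in `N₁` and some `k₂ ∈ K₂` in
`N₂`. By surjectivity of `φ` onto `K₁ × K₂` there is an index `k` whose option copies option
`k₁` in `N₁` and option `k₂` in `N₂`. In the combined menu the utility of `k` is the
`lam`-combination of two maximal utilities, hence maximal, and its price is the
`lam`-combination of the two extracted prices; so the price the combined menu extracts at `v`
is at least that combination. Integrating this almost-sure inequality gives the bound.
-/

open MeasureTheory Finset

namespace RN

/-- A RochetNet menu: for each of the `K+1` option indices, an allocation in `[0,1]^n`
and a price. -/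
abbrev Menu (n K : ℕ) := Fin (K + 1) → (Fin n → ℝ) × ℝ

/-- Inner product of a valuation and an allocation. -/
def dotp {n : ℕ} (v x : Fin n → ℝ) : ℝ := ∑ j, v j * x j

/-- A valid menu: allocations in `[0,1]^n`, nonnegative prices, default option `(0,0)`. -/
def IsMenu {n K : ℕ} (M : Menu n K) : Prop :=
  (∀ k j, 0 ≤ (M k).1 j ∧ (M k).1 j ≤ 1) ∧ (∀ k, 0 ≤ (M k).2) ∧ M 0 = 0

/-- Utility of option `k` for valuation `v`. -/
def util {n K : ℕ} (M : Menu n K) (v : Fin n → ℝ) (k : Fin (K + 1)) : ℝ :=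
  dotp v (M k).1 - (M k).2

/-- Price extracted at valuation `v`: the maximal price among utility-maximizing options. -/
noncomputable def price {n K : ℕ} (M : Menu n K) (v : Fin n → ℝ) : ℝ :=
  sSup {p : ℝ | ∃ k, (∀ k', util M v k' ≤ util M v k) ∧ p = (M k).2}

/-- Option `k` is the buyer's selected option at `v`: it maximizes utility and, among
utility maximizers, has maximal price. -/
def Selected {n K : ℕ} (M : Menu n K) (v : Fin n → ℝ) (k : Fin (K + 1)) : Prop :=
  (∀ k', util M v k' ≤ util M v k) ∧ (M k).2 = price M v

/-- The set of valuations. -/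
def V (n : ℕ) : Set (Fin n → ℝ) :=
  {v | (∀ j, 0 ≤ v j ∧ v j ≤ 1) ∧ ∑ j, v j ≤ 1}

/-- Expected revenue of menu `M` under valuation distribution `F`. -/
noncomputable def Rev {n K : ℕ} (F : Measure (Fin n → ℝ)) (M : Menu n K) : ℝ :=
  ∫ v, price M v ∂F

/-- Option-wise convex combination `lam • M + (1 - lam) • M'` of two menus. -/
noncomputable def comb {n K : ℕ} (lam : ℝ) (M M' : Menu n K) : Menu n K :=
  fun k => (fun j => lam * (M k).1 j + (1 - lam) * (M' k).1 j,
            lam * (M k).2 + (1 - lam) * (M' k).2)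

/-- `M` is `ε`-reducible: some subset `K'` of options containing the default option, of
cardinality at most `√(K+1)`, contains the buyer's selected option with probability
at least `1 - ε`. -/
def Reducible {n K : ℕ} (F : Measure (Fin n → ℝ)) (M : Menu n K) (ε : ℝ) : Prop :=
  ∃ K' : Finset (Fin (K + 1)), 0 ∈ K' ∧ (K'.card : ℝ) ≤ Real.sqrt (K + 1) ∧
    (F {v | ∃ k ∈ K', Selected M v k}).toReal ≥ 1 - ε

/-- `M₁` and `M₂` are `ε`-mode-connected by a piecewise linear path with `pieces` linear
pieces, all whose menus are valid and have revenue at least `min (Rev M₁) (Rev M₂) - ε`. -/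
def PLConnected {n K : ℕ} (F : Measure (Fin n → ℝ)) (M₁ M₂ : Menu n K) (ε : ℝ)
    (pieces : ℕ) : Prop :=
  ∃ P : Fin (pieces + 1) → Menu n K, P 0 = M₁ ∧ P (Fin.last pieces) = M₂ ∧
    (∀ i, IsMenu (P i)) ∧
    ∀ i : Fin pieces, ∀ lam ∈ Set.Icc (0 : ℝ) 1,
      Rev F (comb lam (P i.castSucc) (P i.succ)) ≥ min (Rev F M₁) (Rev F M₂) - ε

variable {n K : ℕ}

lemma exists_price_eq (M : Menu n K) (v : Fin n → ℝ) :
    ∃ k, (∀ k', util M v k' ≤ util M v k) ∧ price M v = (M k).2 := by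
  set S := {p : ℝ | ∃ k, (∀ k', util M v k' ≤ util M v k) ∧ p = (M k).2}
  have hfin : S.Finite :=
    (Set.finite_range fun k => (M k).2).subset fun _ ⟨k, _, hp⟩ => ⟨k, hp.symm⟩
  obtain ⟨k, hk⟩ := Finite.exists_max (util M v)
  obtain ⟨k', hk', he⟩ : sSup S ∈ S := Set.Nonempty.csSup_mem ⟨_, k, hk, rfl⟩ hfin
  exact ⟨k', hk', he⟩

lemma le_price {M : Menu n K} {v : Fin n → ℝ} {k : Fin (K + 1)}
    (hk : ∀ k', util M v k' ≤ util M v k) : (M k).2 ≤ price M v := by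
  refine le_csSup ((Set.finite_range fun k => (M k).2).subset ?_).bddAbove ⟨k, hk, rfl⟩
  rintro _ ⟨k', _, rfl⟩
  exact ⟨k', rfl⟩

lemma price_eq_sup' (M : Menu n K) (v : Fin n → ℝ) :
    price M v = univ.sup' univ_nonempty fun k =>
      if ∀ k', util M v k' ≤ util M v k then (M k).2
      else univ.inf' univ_nonempty fun k => (M k).2 := by
  obtain ⟨k₀, hk₀, he⟩ := exists_price_eq M v
  refine le_antisymm ?_ (sup'_le _ _ fun k _ => ?_)
  · exact le_sup'_of_le _ (mem_univ k₀) (by rw [if_pos hk₀, he])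
  · split_ifs with hk
    · exact le_price hk
    · exact (inf'_le _ (mem_univ k₀)).trans_eq he.symm

lemma measurable_util (M : Menu n K) (k : Fin (K + 1)) :
    Measurable fun v => util M v k := by
  unfold util dotp
  fun_prop

lemma measurableSet_forall_util_le (M : Menu n K) (k : Fin (K + 1)) :
    MeasurableSet {v : Fin n → ℝ | ∀ k', util M v k' ≤ util M v k} := by
  simp only [Set.ofPred_forall]
  exact .iInter fun k' => measurableSet_le (measurable_util M k') (measurable_util M k)

lemma measurable_price (M : Menu n K) : Measurable (price M) := by
  convert Finset.measurable_sup' univ_nonempty fun k _ =>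
    (measurable_const.ite (measurableSet_forall_util_le M k) measurable_const : Measurable fun v =>
      if ∀ k', util M v k' ≤ util M v k then (M k).2
      else univ.inf' univ_nonempty fun k => (M k).2) using 1
  funext v
  rw [price_eq_sup', Finset.sup'_apply]

lemma integrable_price (F : Measure (Fin n → ℝ)) [IsFiniteMeasure F] (M : Menu n K) :
    Integrable (price M) F := by
  refine .of_bound (measurable_price M).aestronglyMeasurable (∑ k, |(M k).2|) (.of_forall ?_)
  intro v
  obtain ⟨k, _, he⟩ := exists_price_eq M v
  rw [he, Real.norm_eq_abs]
  exact single_le_sum (f := fun k => |(M k).2|) (fun _ _ => abs_nonneg _) (mem_univ k)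

lemma measurableSet_exists_selected (M : Menu n K) (Ks : Finset (Fin (K + 1))) :
    MeasurableSet {v : Fin n → ℝ | ∃ k ∈ Ks, Selected M v k} := by
  have h : {v : Fin n → ℝ | ∃ k ∈ Ks, Selected M v k} = ⋃ k ∈ Ks, {v | Selected M v k} := by
    ext v
    simp only [Set.mem_ofPred_eq, Set.mem_iUnion, exists_prop]
  rw [h]
  exact .biUnion Ks.countable_toSet fun k _ => (measurableSet_forall_util_le M k).inter
    (measurableSet_eq_fun measurable_const (measurable_price M))

lemma util_comb (lam : ℝ) (M M' : Menu n K) (v : Fin n → ℝ) (k : Fin (K + 1)) :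
    util (comb lam M M') v k = lam * util M v k + (1 - lam) * util M' v k := by
  simp only [util, comb, dotp, mul_add, sum_add_distrib, mul_left_comm (v _), ← mul_sum]
  ring

lemma price_comb_ge {lam : ℝ} (hlam : lam ∈ Set.Icc (0 : ℝ) 1) {M M' : Menu n K}
    {v : Fin n → ℝ} {k k₁ k₂ : Fin (K + 1)} (hk₁ : Selected M v k₁) (hk₂ : Selected M' v k₂)
    (e₁ : M k = M k₁) (e₂ : M' k = M' k₂) :
    lam * price M v + (1 - lam) * price M' v ≤ price (comb lam M M') v := by
  have hu₁ : util M v k = util M v k₁ := by rw [util, util, e₁]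
  have hu₂ : util M' v k = util M' v k₂ := by rw [util, util, e₂]
  have hmax : ∀ k', util (comb lam M M') v k' ≤ util (comb lam M M') v k := fun k' => by
    rw [util_comb, util_comb, hu₁, hu₂]
    exact add_le_add (mul_le_mul_of_nonneg_left (hk₁.1 k') hlam.1)
      (mul_le_mul_of_nonneg_left (hk₂.1 k') (sub_nonneg.2 hlam.2))
  calc lam * price M v + (1 - lam) * price M' v = (comb lam M M' k).2 := by
        simp only [comb, e₁, e₂, hk₁.2, hk₂.2]
    _ ≤ price (comb lam M M') v := le_price hmax

lemma Rev_comb_ge_of_ae (F : Measure (Fin n → ℝ)) [IsFiniteMeasure F] {lam : ℝ}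
    {M M' : Menu n K}
    (h : ∀ᵐ v ∂F, lam * price M v + (1 - lam) * price M' v ≤ price (comb lam M M') v) :
    lam * Rev F M + (1 - lam) * Rev F M' ≤ Rev F (comb lam M M') := by
  have hint₁ := (integrable_price F M).const_mul lam
  have hint₂ := (integrable_price F M').const_mul (1 - lam)
  calc lam * Rev F M + (1 - lam) * Rev F M'
      = ∫ v, (lam * price M v + (1 - lam) * price M' v) ∂F := by
        rw [integral_add hint₁ hint₂, integral_const_mul, integral_const_mul, Rev, Rev]
    _ ≤ Rev F (comb lam M M') := integral_mono_ae (hint₁.add hint₂) (integrable_price F _) h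

lemma ae_exists_selected (F : Measure (Fin n → ℝ)) [IsProbabilityMeasure F] {M : Menu n K}
    {Ks : Finset (Fin (K + 1))} (h : F {v | ∃ k ∈ Ks, Selected M v k} = 1) :
    ∀ᵐ v ∂F, ∃ k ∈ Ks, Selected M v k := by
  rwa [ae_iff_measure_eq (measurableSet_exists_selected M Ks).nullMeasurableSet, measure_univ]

theorem statement3_general {n K : ℕ} (F : Measure (Fin n → ℝ)) [IsProbabilityMeasure F]
    (N₁ N₂ : Menu n K)
    (K₁ K₂ : Finset (Fin (K + 1)))
    (φ : Fin (K + 1) → Fin (K + 1) × Fin (K + 1))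
    (hφsurj : ∀ p : Fin (K + 1) × Fin (K + 1), p.1 ∈ K₁ → p.2 ∈ K₂ → ∃ k, φ k = p)
    (hrep₁ : ∀ k, N₁ k = N₁ (φ k).1) (hrep₂ : ∀ k, N₂ k = N₂ (φ k).2)
    (hsel₁ : F {v | ∃ k ∈ K₁, Selected N₁ v k} = 1)
    (hsel₂ : F {v | ∃ k ∈ K₂, Selected N₂ v k} = 1) :
    ∀ lam ∈ Set.Icc (0 : ℝ) 1,
      Rev F (comb lam N₁ N₂) ≥ lam * Rev F N₁ + (1 - lam) * Rev F N₂ := by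
  intro lam hlam
  apply Rev_comb_ge_of_ae
  filter_upwards [ae_exists_selected F hsel₁, ae_exists_selected F hsel₂]
    with v ⟨k₁, hk₁K, hk₁⟩ ⟨k₂, hk₂K, hk₂⟩
  obtain ⟨k, hk⟩ := hφsurj (k₁, k₂) hk₁K hk₂K
  exact price_comb_ge hlam hk₁ hk₂ (by rw [hrep₁ k, hk]) (by rw [hrep₂ k, hk])

/-- Let `N₁`, `N₂` be menus, `K₁, K₂ ⊆ {0,…,K}`, and
`φ : {0,…,K} → K₁ × K₂` a bijection with components `φ₁, φ₂` such that the `k`-th option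
of `N₁` equals its `φ₁ k`-th option and the `k`-th option of `N₂` equals its `φ₂ k`-th
option.  If with probability `1` the selected option of `N₁` lies in `K₁` and the
selected option of `N₂` lies in `K₂`, then for every `lam ∈ [0,1]` the convex
combination `lam • N₁ + (1-lam) • N₂` has revenue at least
`lam * Rev N₁ + (1-lam) * Rev N₂`. -/
theorem statement3 {n K : ℕ} (F : Measure (Fin n → ℝ)) [IsProbabilityMeasure F]
    (hFV : F (V n) = 1) (N₁ N₂ : Menu n K) (hN₁ : IsMenu N₁) (hN₂ : IsMenu N₂)
    (K₁ K₂ : Finset (Fin (K + 1)))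
    (φ : Fin (K + 1) → Fin (K + 1) × Fin (K + 1))
    (hφinj : Function.Injective φ)
    (hφmem : ∀ k, (φ k).1 ∈ K₁ ∧ (φ k).2 ∈ K₂)
    (hφsurj : ∀ p : Fin (K + 1) × Fin (K + 1), p.1 ∈ K₁ → p.2 ∈ K₂ → ∃ k, φ k = p)
    (hrep₁ : ∀ k, N₁ k = N₁ (φ k).1) (hrep₂ : ∀ k, N₂ k = N₂ (φ k).2)
    (hsel₁ : F {v | ∃ k ∈ K₁, Selected N₁ v k} = 1)
    (hsel₂ : F {v | ∃ k ∈ K₂, Selected N₂ v k} = 1) :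
    ∀ lam ∈ Set.Icc (0 : ℝ) 1,
      Rev F (comb lam N₁ N₂) ≥ lam * Rev F N₁ + (1 - lam) * Rev F N₂ :=
  statement3_general F N₁ N₂ K₁ K₂ φ hφsurj hrep₁ hrep₂ hsel₁ hsel₂

end RN
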